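/- Let ψ₃₃, ψ₃₄, ψ₄₄ : ℝ² → ℝ be smooth. Then the system of ODEs ẍ₁ = -F₁(x₃,x₄,ẋ₃,ẋ₄), ẍ₂ = -F₂(x₃,x₄,ẋ₃,ẋ₄), ẍ₃ = 0, ẍ₄ = 0, where F₁ = ½ẋ₃²ψ₃₃,₃ + ẋ₃ẋ₄ψ₃₃,₄ + ½ẋ₄²(2ψ₃₄,₄ - ψ₄₄,₃) and F₂ = ½ẋ₃²(2ψ₃₄,₃ - ψ₃₃,₄) + ẋ₃ẋ₄ψ₄₄,₃ + ½ẋ₄²ψ₄₄,₄ (subscripts after the comma denote partial derivatives in x₃ or x₄), has global solutions for all time for any initial conditions. -/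

import Mathlib

/-- Partial derivative with respect to the first variable (`x₃`). -/
noncomputable def pd3 (ψ : ℝ × ℝ → ℝ) (q : ℝ × ℝ) : ℝ := fderiv ℝ ψ q (1, 0)

/-- Partial derivative with respect to the second variable (`x₄`). -/
noncomputable def pd4 (ψ : ℝ × ℝ → ℝ) (q : ℝ × ℝ) : ℝ := fderiv ℝ ψ q (0, 1)

/-- `F₁ = ½ẋ₃²ψ₃₃,₃ + ẋ₃ẋ₄ψ₃₃,₄ + ½ẋ₄²(2ψ₃₄,₄ - ψ₄₄,₃)`. -/
noncomputable def F₁ (ψ33 ψ34 ψ44 : ℝ × ℝ → ℝ) (u3 u4 v3 v4 : ℝ) : ℝ :=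
  (1 / 2) * v3 ^ 2 * pd3 ψ33 (u3, u4) + v3 * v4 * pd4 ψ33 (u3, u4) +
    (1 / 2) * v4 ^ 2 * (2 * pd4 ψ34 (u3, u4) - pd3 ψ44 (u3, u4))

/-- `F₂ = ½ẋ₃²(2ψ₃₄,₃ - ψ₃₃,₄) + ẋ₃ẋ₄ψ₄₄,₃ + ½ẋ₄²ψ₄₄,₄`. -/
noncomputable def F₂ (ψ33 ψ34 ψ44 : ℝ × ℝ → ℝ) (u3 u4 v3 v4 : ℝ) : ℝ :=
  (1 / 2) * v3 ^ 2 * (2 * pd3 ψ34 (u3, u4) - pd4 ψ33 (u3, u4)) +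
    v3 * v4 * pd3 ψ44 (u3, u4) + (1 / 2) * v4 ^ 2 * pd4 ψ44 (u3, u4)

lemma pd3_continuous {ψ : ℝ × ℝ → ℝ} (h : ContDiff ℝ (⊤ : ℕ∞) ψ) : Continuous (pd3 ψ) :=
  (h.continuous_fderiv (by simp)).clm_apply continuous_const

lemma pd4_continuous {ψ : ℝ × ℝ → ℝ} (h : ContDiff ℝ (⊤ : ℕ∞) ψ) : Continuous (pd4 ψ) :=
  (h.continuous_fderiv (by simp)).clm_apply continuous_const

/-- Second antiderivative with prescribed initial conditions. -/
lemma antideriv2 (f : ℝ → ℝ) (hf : Continuous f) (a b : ℝ) :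
    ∃ x : ℝ → ℝ, x 0 = a ∧ (∀ t, deriv x t = b + ∫ s in (0:ℝ)..t, f s) ∧
      (∀ t, DifferentiableAt ℝ x t ∧ DifferentiableAt ℝ (deriv x) t) ∧
      ∀ t, deriv (deriv x) t = f t := by
  set h : ℝ → ℝ := fun t => ∫ s in (0:ℝ)..t, f s with hh
  have hderiv : ∀ t, HasDerivAt h (f t) t := by
    intro t
    exact intervalIntegral.integral_hasDerivAt_right
      (hf.intervalIntegrable 0 t) (hf.stronglyMeasurableAtFilter _ _) hf.continuousAt
  have hcont : Continuous h := by
    apply continuous_iff_continuousAt.2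
    intro t
    exact (hderiv t).differentiableAt.continuousAt
  refine ⟨fun t => a + b * t + ∫ s in (0:ℝ)..t, h s, by simp, ?_⟩
  have hx : ∀ t, HasDerivAt (fun t => a + b * t + ∫ s in (0:ℝ)..t, h s) (b + h t) t := by
    intro t
    have h1 : HasDerivAt (fun t : ℝ => a + b * t) b t := by
      simpa using ((hasDerivAt_id t).const_mul b).const_add a
    have h2 : HasDerivAt (fun u => ∫ s in (0:ℝ)..u, h s) (h t) t :=
      intervalIntegral.integral_hasDerivAt_right
        (hcont.intervalIntegrable 0 t) (hcont.stronglyMeasurableAtFilter _ _) hcont.continuousAt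
    exact h1.add h2
  have hd1 : ∀ t, deriv (fun t => a + b * t + ∫ s in (0:ℝ)..t, h s) t = b + h t :=
    fun t => (hx t).deriv
  refine ⟨hd1, fun t => ⟨(hx t).differentiableAt, ?_⟩, ?_⟩
  · rw [funext hd1]
    exact (((hderiv t).const_add b)).differentiableAt
  · intro t
    rw [funext hd1]
    exact ((hderiv t).const_add b).deriv

lemma deriv_linear (a b : ℝ) : deriv (fun t : ℝ => a + b * t) = fun _ => b := by
  funext t
  simpa using (((hasDerivAt_id t).const_mul b).const_add a).deriv

/-- The geodesic system of a strict Walker manifold of signature (2,2) has global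
solutions for all time, for any initial conditions. -/
theorem stmt_7 (ψ33 ψ34 ψ44 : ℝ × ℝ → ℝ)
    (hsmooth : ContDiff ℝ (⊤ : ℕ∞) ψ33 ∧ ContDiff ℝ (⊤ : ℕ∞) ψ34 ∧ ContDiff ℝ (⊤ : ℕ∞) ψ44)
    (a₁ b₁ a₂ b₂ a₃ b₃ a₄ b₄ : ℝ) :
    ∃ x₁ x₂ x₃ x₄ : ℝ → ℝ,
      (∀ x ∈ [x₁, x₂, x₃, x₄], ∀ t : ℝ,
        DifferentiableAt ℝ x t ∧ DifferentiableAt ℝ (deriv x) t) ∧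
      x₁ 0 = a₁ ∧ deriv x₁ 0 = b₁ ∧ x₂ 0 = a₂ ∧ deriv x₂ 0 = b₂ ∧
      x₃ 0 = a₃ ∧ deriv x₃ 0 = b₃ ∧ x₄ 0 = a₄ ∧ deriv x₄ 0 = b₄ ∧
      (∀ t : ℝ,
        deriv (deriv x₁) t =
          -F₁ ψ33 ψ34 ψ44 (x₃ t) (x₄ t) (deriv x₃ t) (deriv x₄ t) ∧
        deriv (deriv x₂) t =
          -F₂ ψ33 ψ34 ψ44 (x₃ t) (x₄ t) (deriv x₃ t) (deriv x₄ t) ∧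
        deriv (deriv x₃) t = 0 ∧ deriv (deriv x₄) t = 0) := by
  obtain ⟨h33, h34, h44⟩ := hsmooth
  set x₃ : ℝ → ℝ := fun t => a₃ + b₃ * t with hx₃
  set x₄ : ℝ → ℝ := fun t => a₄ + b₄ * t with hx₄
  have hd3 : deriv x₃ = fun _ => b₃ := deriv_linear a₃ b₃
  have hd4 : deriv x₄ = fun _ => b₄ := deriv_linear a₄ b₄
  have hdd3 : deriv (deriv x₃) = fun _ => (0:ℝ) := by rw [hd3]; exact deriv_const' b₃
  have hdd4 : deriv (deriv x₄) = fun _ => (0:ℝ) := by rw [hd4]; exact deriv_const' b₄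
  have hℓ : Continuous fun t : ℝ => (x₃ t, x₄ t) :=
    (continuous_const.add (continuous_const.mul continuous_id)).prodMk
      (continuous_const.add (continuous_const.mul continuous_id))
  have hc : ∀ (ψ : ℝ × ℝ → ℝ), ContDiff ℝ (⊤ : ℕ∞) ψ →
      Continuous (fun t => pd3 ψ (x₃ t, x₄ t)) ∧
      Continuous (fun t => pd4 ψ (x₃ t, x₄ t)) :=
    fun ψ h => ⟨(pd3_continuous h).comp hℓ, (pd4_continuous h).comp hℓ⟩
  set g₁ : ℝ → ℝ := fun t => -F₁ ψ33 ψ34 ψ44 (x₃ t) (x₄ t) b₃ b₄ with hg₁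
  set g₂ : ℝ → ℝ := fun t => -F₂ ψ33 ψ34 ψ44 (x₃ t) (x₄ t) b₃ b₄ with hg₂
  obtain ⟨h33_3, h33_4⟩ := hc ψ33 h33
  obtain ⟨h34_3, h34_4⟩ := hc ψ34 h34
  obtain ⟨h44_3, h44_4⟩ := hc ψ44 h44
  have hcg₁ : Continuous g₁ := by
    simp only [hg₁, F₁]
    exact Continuous.neg
      (((continuous_const.mul h33_3).add (continuous_const.mul h33_4)).add
        (continuous_const.mul ((continuous_const.mul h34_4).sub h44_3)))
  have hcg₂ : Continuous g₂ := by
    simp only [hg₂, F₂]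
    exact Continuous.neg
      (((continuous_const.mul ((continuous_const.mul h34_3).sub h33_4)).add
        (continuous_const.mul h44_3)).add (continuous_const.mul h44_4))
  obtain ⟨x₁, hx₁0, hx₁d, hx₁diff, hx₁dd⟩ := antideriv2 g₁ hcg₁ a₁ b₁
  obtain ⟨x₂, hx₂0, hx₂d, hx₂diff, hx₂dd⟩ := antideriv2 g₂ hcg₂ a₂ b₂
  refine ⟨x₁, x₂, x₃, x₄, ?_, hx₁0, by simp [hx₁d 0], hx₂0, by simp [hx₂d 0],
    by simp [hx₃], by simp [hd3], by simp [hx₄], by simp [hd4], ?_⟩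
  · intro x hx t
    simp only [List.mem_cons, List.mem_singleton, List.not_mem_nil, or_false] at hx
    rcases hx with rfl | rfl | rfl | rfl
    · exact hx₁diff t
    · exact hx₂diff t
    · exact ⟨(((hasDerivAt_id t).const_mul b₃).const_add a₃).differentiableAt,
        by rw [hd3]; exact differentiableAt_const _⟩
    · exact ⟨(((hasDerivAt_id t).const_mul b₄).const_add a₄).differentiableAt,
        by rw [hd4]; exact differentiableAt_const _⟩
  · intro t
    refine ⟨?_, ?_, by rw [hdd3], by rw [hdd4]⟩
    · rw [hx₁dd t, hd3, hd4]
    · rw [hx₂dd t, hd3, hd4]
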